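/- For n ≥ 2, n ≥ k > l ≥ 0 and λ in the k-positive cone Γₖ ⊂ ℝⁿ ordered so that λ₁ ≥ λ₂ ≥ ... ≥ λₙ, the partial derivatives F^{i} = ∂/∂λᵢ of F(λ) = log(Sₖ(λ)/Sₗ(λ)) satisfy F^{i} = S_{k-1;i}(λ)/Sₖ(λ) - S_{l-1;i}(λ)/Sₗ(λ), and these are ordered in reverse: Fⁿ ≥ F^{n-1} ≥ ... ≥ F¹ ≥ 0 (with F¹ > 0). -/

import Mathlib

/-- The m-th elementary symmetric polynomial of λ ∈ ℝⁿ, with degree in ℤ so that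
negative degrees give 0 (and degree 0 gives 1). -/
noncomputable def esymm (n : ℕ) (m : ℤ) (lam : Fin n → ℝ) : ℝ :=
  if 0 ≤ m then
    ∑ t ∈ Finset.powersetCard m.toNat (Finset.univ : Finset (Fin n)), ∏ i ∈ t, lam i
  else 0

/-- S_{m;i}(λ) = Sₘ(λ with λᵢ set to 0). -/
noncomputable def esymmAt (n : ℕ) (m : ℤ) (lam : Fin n → ℝ) (i : Fin n) : ℝ :=
  esymm n m (Function.update lam i 0)

/-!
Write `λ|i` for `λ` with its `i`-th entry removed, so that `S_{m;i}(λ) = Sₘ(λ|i)`. Since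
`Sₘ(λ) = Sₘ(λ|i) + λᵢ S_{m-1}(λ|i)` is affine in `λᵢ`, the partial derivative of `log Sₘ` is
`φᵢ(m) = S_{m-1}(λ|i) / Sₘ(λ)`, and `Fⁱ = φᵢ(k) - φᵢ(l)`. By the same splitting, `φᵢ(m) < φᵢ(m+1)`
is equivalent to Newton's inequality `S_{m-1}(λ|i) S_{m+1}(λ|i) < Sₘ(λ|i)²`, which is strict because
`λ|i ∈ Γ_{k-1}`. That last fact is proved by induction on `k`: moving `λ` along `(1, …, 1)` keeps
it in `Γₖ`, and at a zero of `S_{k-1}(λ|i)` Newton's inequality would contradict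
`S_{k-2}(λ|i) > 0 < S_k(λ|i)`; by the intermediate value theorem `S_{k-1}(λ|i)` therefore keeps
the positive sign it has far out on the ray.

For the ordering, `φⱼ(m) - φᵢ(m) = (λᵢ - λⱼ) S_{m-2}(λ|ij) / Sₘ(λ)`, and the last ratio is the
product of the increasing nonnegative ratios `S_{m-2}(λ|ij) / S_{m-1}(λ|i)` and `φᵢ(m)`.

Newton's inequality itself comes from Rolle's theorem: differentiating, reversing and
differentiating again the real-rooted polynomial `∏ (X + λⱼ)` leaves a real-rooted quadratic whose
coefficients are multiples of three consecutive `Sₘ`.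
-/

open Polynomial Nat

theorem Nat.cast_descFactorial_add_eq_div (s r : ℕ) :
    ((s + r).descFactorial s : ℝ) = (s + r)! / r ! := by
  rw [eq_div_iff (by positivity), mul_comm]
  exact_mod_cast Nat.add_sub_cancel_left s r ▸ factorial_mul_descFactorial (le_add_right s r)

theorem Nat.factorial_succ_mul_sq_lt (a b : ℕ) :
    ((a + 1)! * (b + 1)!) ^ 2 < a ! * (a + 2)! * (b ! * (b + 2)!) := by
  have h : (a + 1) * (b + 1) < (a + 2) * (b + 2) := by nlinarith
  have := a.factorial_pos
  have := b.factorial_pos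
  simp only [factorial_succ]
  calc ((a + 1) * a ! * ((b + 1) * b !)) ^ 2
      = ((a + 1) * (b + 1)) * ((a + 1) * (b + 1)) * (a ! * b !) ^ 2 := by ring
    _ < ((a + 1) * (b + 1)) * ((a + 2) * (b + 2)) * (a ! * b !) ^ 2 := by gcongr
    _ = _ := by ring

namespace Polynomial

theorem Splits.reverse {K : Type*} [Field K] {p : K[X]} (hp : p.Splits) : p.reverse.Splits := by
  induction hp using Submonoid.closure_induction with
  | mem f hf =>
    refine Splits.of_natDegree_le_one ((reverse_natDegree_le f).trans ?_)
    rcases hf with ⟨a, rfl⟩ | ⟨a, rfl⟩ <;> simp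
  | one => rw [← C_1, reverse_C]; exact Splits.C 1
  | mul f g _ _ hf hg => rw [reverse_mul_of_domain]; exact hf.mul hg

theorem Splits.derivative {p : ℝ[X]} (hp : p.Splits) : p.derivative.Splits := by
  by_cases hp₀ : p.natDegree = 0
  · rw [eq_C_of_natDegree_eq_zero hp₀, derivative_C]
    exact Splits.zero
  rw [splits_iff_card_roots] at hp ⊢
  have := natDegree_derivative_lt hp₀
  have := p.card_roots_le_derivative
  have := p.derivative.card_roots'
  omega

theorem Splits.iterate_derivative {p : ℝ[X]} (hp : p.Splits) (k : ℕ) :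
    (Polynomial.derivative^[k] p).Splits := by
  induction k with
  | zero => exact hp
  | succ k ih => rw [Function.iterate_succ_apply']; exact ih.derivative

theorem Splits.discrim_nonneg {K : Type*} [Field K] [LinearOrder K] [IsStrictOrderedRing K]
    {q : K[X]} (hq : q.Splits) (hdeg : q.natDegree ≤ 2) :
    0 ≤ discrim (q.coeff 2) (q.coeff 1) (q.coeff 0) := by
  by_cases h₂ : q.coeff 2 = 0
  · rw [discrim, h₂]; nlinarith [sq_nonneg (q.coeff 1)]
  have hdeg₂ : q.natDegree = 2 := le_antisymm hdeg (le_natDegree_of_ne_zero h₂)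
  obtain ⟨x, hx⟩ := hq.exists_eval_eq_zero
    (by rw [degree_eq_natDegree (by rintro rfl; simp at h₂), hdeg₂]; decide)
  rw [eval_eq_sum_range' (n := 3) (by omega)] at hx
  simp only [Finset.sum_range_succ, Finset.sum_range_zero] at hx
  rw [discrim_eq_sq_of_quadratic_eq_zero (x := x) (by linear_combination hx)]
  positivity

/-- Newton's inequalities `cⱼ² / C(d,j)² ≥ c_{j-1} c_{j+1} / (C(d,j-1) C(d,j+1))` for the
coefficients of a real-rooted polynomial of degree `d = a + b + 2`, with `j = b + 1` and the
binomial weights cleared. -/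
theorem Splits.newton_inequality {p : ℝ[X]} (hp : p.Splits) {a b : ℕ}
    (hdeg : p.natDegree = a + b + 2) :
    (a ! * (a + 2)! * (b ! * (b + 2)!) : ℝ) * (p.coeff b * p.coeff (b + 2))
      ≤ ((a + 1)! * (b + 1)! : ℝ) ^ 2 * p.coeff (b + 1) ^ 2 := by
  set h := Polynomial.derivative^[b] p
  have hh j : h.coeff j = (j + b).descFactorial b * p.coeff (j + b) := by
    simp [h, coeff_iterate_derivative, nsmul_eq_mul]
  have hh_deg : h.natDegree = a + 2 := by
    refine le_antisymm ((natDegree_iterate_derivative p b).trans (by omega))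
      (le_natDegree_of_ne_zero ?_)
    rw [hh, show a + 2 + b = p.natDegree by omega]
    exact mul_ne_zero (by exact_mod_cast (descFactorial_pos.2 (by omega)).ne')
      (leadingCoeff_ne_zero.2 (by rintro rfl; simp at hdeg))
  set q := Polynomial.derivative^[a] h.reverse
  have hq i j (hij : i + j = 2) :
      q.coeff i = (a + i).descFactorial a * ((b + j).descFactorial b * p.coeff (b + j)) := by
    simp only [q, coeff_iterate_derivative, nsmul_eq_mul, coeff_reverse, hh_deg,
      revAt_le (show i + a ≤ a + 2 by omega), hh]
    rw [show a + 2 - (i + a) + b = b + j by omega, add_comm i a]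
  have hq_deg : q.natDegree ≤ 2 :=
    (natDegree_iterate_derivative _ a).trans (by have := reverse_natDegree_le h; omega)
  have key := ((hp.iterate_derivative b).reverse.iterate_derivative a).discrim_nonneg hq_deg
  rw [discrim, hq 0 2 rfl, hq 1 1 rfl, hq 2 0 rfl] at key
  simp only [cast_descFactorial_add_eq_div, add_zero, descFactorial_self, factorial_one,
    factorial_two, cast_one, cast_ofNat, div_one] at key
  linear_combination key

end Polynomial

namespace Multiset

section CommSemiring
variable {R : Type*} [CommSemiring R]

theorem esymm_zero (t : Multiset R) : t.esymm 0 = 1 := by simp [esymm]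

theorem esymm_cons_succ (a : R) (t : Multiset R) (m : ℕ) :
    (a ::ₘ t).esymm (m + 1) = t.esymm (m + 1) + a * t.esymm m := by
  simp [esymm, powersetCard_cons, sum_map_mul_left]

theorem esymm_eq_zero_of_card_lt {t : Multiset R} {m : ℕ} (h : card t < m) : t.esymm m = 0 := by
  simp [esymm, powersetCard_eq_empty _ h]

theorem natDegree_prod_X_add_C [Nontrivial R] (t : Multiset R) :
    (t.map fun r => X + C r).prod.natDegree = card t := by
  rw [natDegree_multiset_prod_of_monic _ (by simp [monic_X_add_C])]
  simp

theorem esymm_map_add_eq_eval_hasseDeriv (x : Multiset R) (c : R) {j : ℕ} (hj : j ≤ card x) :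
    (x.map (· + c)).esymm j = (hasseDeriv (card x - j) (x.map fun r => X + C r).prod).eval c := by
  rw [← taylor_coeff, taylor_apply, multiset_prod_comp, map_map]
  have : x.map ((fun p => p.comp (X + C c)) ∘ fun r => X + C r)
      = (x.map (· + c)).map fun r => X + C r := by
    rw [map_map]
    refine map_congr rfl fun r _ => ?_
    simp [add_comm, add_left_comm]
  rw [this, prod_X_add_C_coeff _ (by simp), card_map, Nat.sub_sub_self hj]

end CommSemiring

theorem esymm_zero_cons (t : Multiset ℝ) (m : ℕ) : (0 ::ₘ t).esymm m = t.esymm m := by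
  cases m <;> simp [esymm_zero, esymm_cons_succ]

theorem esymm_mul_esymm_lt_sq_of_pos {x : Multiset ℝ} {m : ℕ}
    (h : 0 < x.esymm m * x.esymm (m + 2)) : x.esymm m * x.esymm (m + 2) < x.esymm (m + 1) ^ 2 := by
  obtain ⟨b, hb⟩ : ∃ b, card x = m + b + 2 := by
    refine ⟨card x - (m + 2), ?_⟩
    have : m + 2 ≤ card x := by
      by_contra! hc
      rw [esymm_eq_zero_of_card_lt hc, mul_zero] at h
      exact h.false
    omega
  have hP : (x.map fun r => X + C r).prod.Splits := Splits.multisetProd (by simp)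
  have newton := hP.newton_inequality (a := m) (b := b) (by rw [natDegree_prod_X_add_C, hb])
  simp only [prod_X_add_C_coeff _ (show b ≤ card x by omega),
    prod_X_add_C_coeff _ (show b + 1 ≤ card x by omega),
    prod_X_add_C_coeff _ (show b + 2 ≤ card x by omega), hb, show m + b + 2 - b = m + 2 by omega,
    show m + b + 2 - (b + 1) = m + 1 by omega, show m + b + 2 - (b + 2) = m by omega] at newton
  have hlt : (((m + 1)! * (b + 1)!) ^ 2 : ℝ) < m ! * (m + 2)! * (b ! * (b + 2)!) := by
    exact_mod_cast factorial_succ_mul_sq_lt m b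
  refine lt_of_mul_lt_mul_left ?_ (by positivity : (0 : ℝ) ≤ ((m + 1)! * (b + 1)!) ^ 2)
  calc _ < (m ! * (m + 2)! * (b ! * (b + 2)!) : ℝ) * (x.esymm m * x.esymm (m + 2)) := by gcongr
    _ ≤ _ := by linear_combination newton

theorem esymm_mul_esymm_le_sq (x : Multiset ℝ) (m : ℕ) :
    x.esymm m * x.esymm (m + 2) ≤ x.esymm (m + 1) ^ 2 := by
  rcases le_or_gt (x.esymm m * x.esymm (m + 2)) 0 with h | h
  · exact h.trans (sq_nonneg _)
  · exact (esymm_mul_esymm_lt_sq_of_pos h).le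

theorem esymm_mul_esymm_lt_sq_of_ne_zero {x : Multiset ℝ} {m : ℕ} (hm : x.esymm (m + 1) ≠ 0) :
    x.esymm m * x.esymm (m + 2) < x.esymm (m + 1) ^ 2 := by
  rcases le_or_gt (x.esymm m * x.esymm (m + 2)) 0 with h | h
  · exact h.trans_lt (by positivity)
  · exact esymm_mul_esymm_lt_sq_of_pos h

theorem esymm_pos_of_forall_pos {x : Multiset ℝ} (hx : ∀ r ∈ x, 0 < r) {m : ℕ}
    (hm : m ≤ card x) : 0 < x.esymm m := by
  induction x using Multiset.induction generalizing m with
  | empty => simp_all [esymm_zero]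
  | cons a t ih =>
    obtain _ | m := m
    · simp [esymm_zero]
    have ha : 0 < a := hx a (mem_cons_self a t)
    have ht : ∀ r ∈ t, 0 < r := fun r hr => hx r (mem_cons_of_mem hr)
    rw [card_cons] at hm
    rw [esymm_cons_succ]
    rcases Nat.lt_or_ge (card t) (m + 1) with hlt | hle
    · rw [esymm_eq_zero_of_card_lt hlt, zero_add]
      exact mul_pos ha (ih ht (by omega))
    · exact add_pos (ih ht hle) (mul_pos ha (ih ht (by omega)))

/-- The cone `Γ_K` on multisets of reals (the condition at `j = 0` is `S₀ = 1 > 0`). -/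
def gardingCone (K : ℕ) : Set (Multiset ℝ) := {x | ∀ j ≤ K, 0 < x.esymm j}

theorem gardingCone_antitone : Antitone gardingCone :=
  fun _ _ hKL _ hx j hj => hx j (hj.trans hKL)

theorem le_card_of_mem_gardingCone {x : Multiset ℝ} {K : ℕ} (hx : x ∈ gardingCone K) :
    K ≤ card x := by
  by_contra! h
  exact (hx K le_rfl).ne' (esymm_eq_zero_of_card_lt h)

theorem coeff_prod_X_add_C_nonneg {x : Multiset ℝ} {K : ℕ} (hx : x ∈ gardingCone K) {k : ℕ}
    (hk : card x - K ≤ k) : 0 ≤ (x.map fun r => X + C r).prod.coeff k := by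
  rcases Nat.lt_or_ge (card x) k with hlt | hle
  · rw [coeff_eq_zero_of_natDegree_lt (by rwa [natDegree_prod_X_add_C])]
  · rw [prod_X_add_C_coeff _ hle]
    exact (hx _ (by omega)).le

theorem map_add_mem_gardingCone {x : Multiset ℝ} {K : ℕ} (hx : x ∈ gardingCone K) {c : ℝ}
    (hc : 0 ≤ c) : x.map (· + c) ∈ gardingCone K := by
  intro j hj
  have hjx : j ≤ card x := hj.trans (le_card_of_mem_gardingCone hx)
  rw [esymm_map_add_eq_eval_hasseDeriv x c hjx, eval_eq_sum_range]
  refine Finset.sum_pos' (fun i _ => ?_) ⟨0, by simp, ?_⟩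
  · rw [hasseDeriv_coeff]
    have := coeff_prod_X_add_C_nonneg hx (k := i + (card x - j)) (by omega)
    positivity
  · simp only [hasseDeriv_coeff, zero_add, choose_self, cast_one, one_mul, pow_zero, mul_one]
    rw [prod_X_add_C_coeff _ (by omega), Nat.sub_sub_self hjx]
    exact hx j hj

theorem esymm_pos_of_map_add_ne_zero {t : Multiset ℝ} {m : ℕ} (hm : m ≤ card t)
    (h : ∀ c, 0 ≤ c → (t.map (· + c)).esymm m ≠ 0) : 0 < t.esymm m := by
  set g : ℝ → ℝ := fun c => (t.map (· + c)).esymm m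
  have hg : Continuous g := by
    simp only [g, esymm_map_add_eq_eval_hasseDeriv t _ hm]
    exact Polynomial.continuous _
  have hsum : 0 ≤ (t.map abs).sum := sum_nonneg (by simp)
  set T := (t.map abs).sum + 1
  have hT : 0 ≤ T := by positivity
  have hgT : 0 < g T := by
    refine esymm_pos_of_forall_pos (fun r hr => ?_) (by simpa using hm)
    obtain ⟨r, hrt, rfl⟩ := mem_map.1 hr
    have : |r| ≤ (t.map abs).sum := single_le_sum (by simp) _ (mem_map_of_mem _ hrt)
    linarith [neg_abs_le r]
  by_contra! hg0
  obtain ⟨c, hc, hgc⟩ :=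
    intermediate_value_Icc hT hg.continuousOn ⟨by simpa [g] using hg0, hgT.le⟩
  exact h c hc.1 hgc

theorem esymm_succ_ne_zero_of_cons_mem_gardingCone {a : ℝ} {t : Multiset ℝ} {m : ℕ}
    (hx : a ::ₘ t ∈ gardingCone (m + 2)) (ht : t ∈ gardingCone m) : t.esymm (m + 1) ≠ 0 := by
  intro h0
  have htop := hx (m + 2) le_rfl
  rw [esymm_cons_succ, h0, mul_zero, add_zero] at htop
  have := esymm_mul_esymm_le_sq t m
  rw [h0] at this
  nlinarith [ht m le_rfl]

theorem mem_gardingCone_of_cons_mem {a : ℝ} {t : Multiset ℝ} {K : ℕ}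
    (hx : a ::ₘ t ∈ gardingCone (K + 1)) : t ∈ gardingCone K := by
  induction K generalizing a t with
  | zero => intro j hj; simp [Nat.le_zero.1 hj, esymm_zero]
  | succ K ih =>
    intro j hj
    obtain hj | rfl : j ≤ K ∨ j = K + 1 := by omega
    · exact ih (gardingCone_antitone (by omega) hx) j hj
    have hcard := le_card_of_mem_gardingCone hx
    rw [card_cons] at hcard
    refine esymm_pos_of_map_add_ne_zero (by omega) fun c hc => ?_
    have hxc : (a + c) ::ₘ t.map (· + c) ∈ gardingCone (K + 2) := by
      simpa using map_add_mem_gardingCone hx hc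
    exact esymm_succ_ne_zero_of_cons_mem_gardingCone hxc
      (ih (gardingCone_antitone (by omega) hxc))

theorem esymm_mul_esymm_cons_lt {a : ℝ} {t : Multiset ℝ} {m : ℕ}
    (hx : a ::ₘ t ∈ gardingCone (m + 2)) :
    t.esymm m * (a ::ₘ t).esymm (m + 2) < t.esymm (m + 1) * (a ::ₘ t).esymm (m + 1) := by
  have ht := mem_gardingCone_of_cons_mem hx
  have := esymm_mul_esymm_lt_sq_of_ne_zero (ht (m + 1) le_rfl).ne'
  rw [esymm_cons_succ, esymm_cons_succ]
  linear_combination this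

/-- `esymmRatio t x m = S_{m-1}(t) / Sₘ(x)`, with the convention `S_{-1} = 0` at `m = 0`. -/
noncomputable def esymmRatio (t x : Multiset ℝ) : ℕ → ℝ
  | 0 => 0
  | m + 1 => t.esymm m / x.esymm (m + 1)

theorem strictMonoOn_esymmRatio {a : ℝ} {t : Multiset ℝ} {K : ℕ}
    (hx : a ::ₘ t ∈ gardingCone K) : StrictMonoOn (esymmRatio t (a ::ₘ t)) (Set.Iic K) := by
  refine strictMonoOn_Iic_of_lt_succ fun m hm => ?_
  rw [Order.succ_eq_add_one]
  cases m with
  | zero => simpa [esymmRatio, esymm_zero] using hx 1 (by omega)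
  | succ m =>
    simp only [esymmRatio]
    rw [div_lt_div_iff₀ (hx _ (by omega)) (hx _ (by omega))]
    exact esymm_mul_esymm_cons_lt (gardingCone_antitone (by omega) hx)

theorem esymmRatio_nonneg {a : ℝ} {t : Multiset ℝ} {K m : ℕ} (hx : a ::ₘ t ∈ gardingCone K)
    (hm : m ≤ K) : 0 ≤ esymmRatio t (a ::ₘ t) m :=
  (strictMonoOn_esymmRatio hx).monotoneOn (by simp) hm (Nat.zero_le m)

theorem esymmRatio_cons_sub_cons {a b : ℝ} {u : Multiset ℝ} {K m : ℕ}
    (hx : a ::ₘ b ::ₘ u ∈ gardingCone K) (hm : m ≤ K) :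
    esymmRatio (a ::ₘ u) (a ::ₘ b ::ₘ u) m - esymmRatio (b ::ₘ u) (a ::ₘ b ::ₘ u) m
      = (a - b) * (esymmRatio u (b ::ₘ u) (m - 1) * esymmRatio (b ::ₘ u) (a ::ₘ b ::ₘ u) m) := by
  match m with
  | 0 => simp [esymmRatio]
  | 1 => simp [esymmRatio, esymm_zero]
  | m + 2 =>
    have hbu : b ::ₘ u ∈ gardingCone (m + 1) :=
      mem_gardingCone_of_cons_mem (gardingCone_antitone (by omega) hx)
    rw [show m + 2 - 1 = m + 1 by omega]
    simp only [esymmRatio]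
    rw [div_mul_div_cancel₀ (hbu (m + 1) le_rfl).ne', ← sub_div, esymm_cons_succ a u m,
      esymm_cons_succ b u m]
    ring

theorem monotoneOn_esymmRatio_cons_sub_cons {a b : ℝ} {u : Multiset ℝ} {K : ℕ}
    (hx : a ::ₘ b ::ₘ u ∈ gardingCone K) (hab : b ≤ a) :
    MonotoneOn (fun m => esymmRatio (a ::ₘ u) (a ::ₘ b ::ₘ u) m
      - esymmRatio (b ::ₘ u) (a ::ₘ b ::ₘ u) m) (Set.Iic K) := by
  rcases K with _ | K
  · intro m hm n hn _
    rw [Set.mem_Iic, Nat.le_zero] at hm hn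
    rw [hm, hn]
  have hbu : b ::ₘ u ∈ gardingCone K := mem_gardingCone_of_cons_mem hx
  have hpred : Set.MapsTo (· - 1) (Set.Iic (K + 1)) (Set.Iic K) := fun m hm => by
    simp only [Set.mem_Iic] at hm ⊢; omega
  have h₁ : MonotoneOn (fun m => esymmRatio u (b ::ₘ u) (m - 1)) (Set.Iic (K + 1)) :=
    (strictMonoOn_esymmRatio hbu).monotoneOn.comp (fun _ _ _ _ h => Nat.sub_le_sub_right h 1)
      hpred
  have h₁₂ := h₁.mul (strictMonoOn_esymmRatio hx).monotoneOn
    (fun m hm => esymmRatio_nonneg hbu (hpred hm)) (fun m hm => esymmRatio_nonneg hx hm)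
  intro m hm n hn hmn
  simp only [esymmRatio_cons_sub_cons hx hm, esymmRatio_cons_sub_cons hx hn]
  exact mul_le_mul_of_nonneg_left (h₁₂ hm hn hmn) (sub_nonneg.2 hab)

end Multiset

namespace Finset
variable {ι R : Type*} [DecidableEq ι]

theorem map_val_update {s : Finset ι} {i : ι} (hi : i ∈ s) (f : ι → R) (r : R) :
    s.val.map (Function.update f i r) = r ::ₘ (s.erase i).val.map f := by
  conv_lhs => rw [← Multiset.cons_erase (mem_def.1 hi)]
  rw [Multiset.map_cons, Function.update_self, ← erase_val]
  congr 1
  exact Multiset.map_congr rfl fun j hj => Function.update_of_ne (ne_of_mem_erase hj) r f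

theorem map_val_eq_cons {s : Finset ι} {i : ι} (hi : i ∈ s) (f : ι → R) :
    s.val.map f = f i ::ₘ (s.erase i).val.map f := by
  simpa using map_val_update hi f (f i)

theorem exists_map_val_erase_eq_cons {s : Finset ι} {i j : ι} (hi : i ∈ s) (hj : j ∈ s)
    (hij : i ≠ j) (f : ι → R) :
    ∃ u, (s.erase i).val.map f = f j ::ₘ u ∧ (s.erase j).val.map f = f i ::ₘ u :=
  ⟨_, map_val_eq_cons (mem_erase.2 ⟨hij.symm, hj⟩) f, by
    rw [map_val_eq_cons (mem_erase.2 ⟨hij, hi⟩) f, erase_right_comm]⟩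

end Finset

section FinTuple
open Finset
variable {n : ℕ} (lam : Fin n → ℝ)

theorem esymm_natCast (m : ℕ) : esymm n m lam = (univ.val.map lam).esymm m := by
  rw [esymm, if_pos (Int.natCast_nonneg m), Int.toNat_natCast, esymm_map_val]

theorem esymm_update (i : Fin n) (r : ℝ) (m : ℕ) :
    esymm n m (Function.update lam i r) = (r ::ₘ (univ.erase i).val.map lam).esymm m := by
  rw [esymm_natCast, map_val_update (mem_univ i)]

theorem esymmAt_div_esymm (i : Fin n) (m : ℕ) :
    esymmAt n (m - 1) lam i / esymm n m lam
      = Multiset.esymmRatio ((univ.erase i).val.map lam) (univ.val.map lam) m := by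
  cases m with
  | zero => simp [esymmAt, esymm, Multiset.esymmRatio]
  | succ m =>
    rw [esymmAt, show ((m + 1 : ℕ) : ℤ) - 1 = m by push_cast; ring, esymm_update,
      Multiset.esymm_zero_cons, esymm_natCast]
    rfl

theorem hasDerivAt_log_esymm_update {m : ℕ} (hm : 0 < esymm n m lam) (i : Fin n) :
    HasDerivAt (fun r => Real.log (esymm n m (Function.update lam i r)))
      (esymmAt n (m - 1) lam i / esymm n m lam) (lam i) := by
  rw [esymmAt_div_esymm]
  simp_rw [esymm_update]
  cases m with
  | zero => simpa [Multiset.esymm_zero, Multiset.esymmRatio] using hasDerivAt_const (lam i) 0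
  | succ m =>
    set t := (univ.erase i).val.map lam
    have hx : univ.val.map lam = lam i ::ₘ t := map_val_eq_cons (mem_univ i) lam
    rw [esymm_natCast, hx, Multiset.esymm_cons_succ] at hm
    simp only [Multiset.esymm_cons_succ, Multiset.esymmRatio, hx]
    have hlin : HasDerivAt (fun r => t.esymm (m + 1) + r * t.esymm m) (t.esymm m) (lam i) := by
      simpa using ((hasDerivAt_id (lam i)).mul_const (t.esymm m)).const_add (t.esymm (m + 1))
    exact hlin.log hm.ne'

theorem map_univ_mem_gardingCone {K : ℕ} (h : ∀ j : ℕ, 1 ≤ j → j ≤ K → 0 < esymm n j lam) :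
    univ.val.map lam ∈ Multiset.gardingCone K := fun j hj => by
  rcases j with _ | j
  · simp [Multiset.esymm_zero]
  · rw [← esymm_natCast]; exact h (j + 1) (by omega) hj

theorem strictMonoOn_esymmAt_div_esymm {K : ℕ}
    (hx : univ.val.map lam ∈ Multiset.gardingCone K) (i : Fin n) :
    StrictMonoOn (fun m : ℕ => esymmAt n (m - 1) lam i / esymm n m lam) (Set.Iic K) := by
  simp only [esymmAt_div_esymm]
  rw [map_val_eq_cons (mem_univ i) lam] at hx ⊢
  exact Multiset.strictMonoOn_esymmRatio hx

theorem monotoneOn_esymmAt_div_esymm_sub {K : ℕ}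
    (hx : univ.val.map lam ∈ Multiset.gardingCone K) {i j : Fin n} (hij : i ≠ j)
    (hlam : lam j ≤ lam i) :
    MonotoneOn (fun m : ℕ => esymmAt n (m - 1) lam j / esymm n m lam
      - esymmAt n (m - 1) lam i / esymm n m lam) (Set.Iic K) := by
  obtain ⟨u, hi, hj⟩ := exists_map_val_erase_eq_cons (mem_univ i) (mem_univ j) hij lam
  have hx' : univ.val.map lam = lam i ::ₘ lam j ::ₘ u := by rw [map_val_eq_cons (mem_univ i), hi]
  simp only [esymmAt_div_esymm, hi, hj, hx']
  exact Multiset.monotoneOn_esymmRatio_cons_sub_cons (hx' ▸ hx) hlam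

end FinTuple

/-- For n ≥ 2, n ≥ k > l ≥ 0 and λ ∈ Γₖ ordered λ₁ ≥ ⋯ ≥ λₙ, the partial
derivatives Fⁱ of F(λ) = log(Sₖ(λ)/Sₗ(λ)) = log Sₖ(λ) - log Sₗ(λ) satisfy
Fⁱ = S_{k-1;i}/Sₖ - S_{l-1;i}/Sₗ, they are reverse ordered Fⁿ ≥ ⋯ ≥ F¹ ≥ 0, with F¹ > 0. -/
theorem stmt11 (n k l : ℕ) (hn : 2 ≤ n) (hlk : l < k)
    (lam : Fin n → ℝ)
    (hΓ : ∀ j : ℕ, 1 ≤ j → j ≤ k → 0 < esymm n j lam)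
    (hord : ∀ i j : Fin n, i ≤ j → lam j ≤ lam i)
    (Fd : Fin n → ℝ)
    (hFd : ∀ i, Fd i = esymmAt n ((k : ℤ) - 1) lam i / esymm n k lam
                      - esymmAt n ((l : ℤ) - 1) lam i / esymm n l lam) :
    (∀ i : Fin n, HasDerivAt
        (fun t => Real.log (esymm n k (Function.update lam i t)) -
                  Real.log (esymm n l (Function.update lam i t)))
        (Fd i) (lam i)) ∧
      (∀ i j : Fin n, i ≤ j → Fd i ≤ Fd j) ∧
      (∀ i : Fin n, 0 ≤ Fd i) ∧
      0 < Fd ⟨0, by omega⟩ := by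
  have hx := map_univ_mem_gardingCone lam hΓ
  have hpos i : 0 < Fd i := by
    rw [hFd, sub_pos]
    exact strictMonoOn_esymmAt_div_esymm lam hx i hlk.le Set.self_mem_Iic hlk
  refine ⟨fun i => ?_, fun i j hij => ?_, fun i => (hpos i).le, hpos _⟩
  · have hS m (hm : m ≤ k) : 0 < esymm n m lam := by rw [esymm_natCast]; exact hx m hm
    rw [hFd]
    exact (hasDerivAt_log_esymm_update lam (hS k le_rfl) i).sub
      (hasDerivAt_log_esymm_update lam (hS l hlk.le) i)
  rcases hij.eq_or_lt with rfl | hij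
  · rfl
  have := monotoneOn_esymmAt_div_esymm_sub lam hx hij.ne (hord i j hij.le)
    hlk.le Set.self_mem_Iic hlk.le
  rw [hFd, hFd]
  linarith
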